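/- arXiv:2505.05969 — 2 statements merged into one kernel-verified Lean document; each statement's English description precedes it below -/
import Mathlib

section
/- Let (G,ω) be a connected edge-weighted simple graph and T* a maximum weight spanning tree. Then 2·ω(G) − ω(T*) ≤ C_1(G,ω); in particular, for an unweighted graph with n vertices and m edges, 2m − n + 1 ≤ C_1(G). -/
open Classical

noncomputable section CongestionDefs

variable {V : Type*} [Fintype V] [DecidableEq V]

/-- Weighted congestion of an edge `e` of a spanning tree `T` of `G`: total weight of
edges of `G` whose endpoints are separated in `T` with `e` removed. -/
def edgeCongestion (G T : SimpleGraph V) (ω : Sym2 V → ℝ) (e : Sym2 V) : ℝ :=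
  ∑ f : Sym2 V,
    if f ∈ G.edgeSet ∧ ∃ a b : V, f = s(a, b) ∧ ¬ (T.deleteEdges {e}).Reachable a b
    then ω f else 0

/-- The `L^p` congestion of a spanning tree `T` (for a natural `p ≥ 1`). -/
def treeCong (G T : SimpleGraph V) (ω : Sym2 V → ℝ) (p : ℕ) : ℝ :=
  (∑ e : Sym2 V, if e ∈ T.edgeSet then (edgeCongestion G T ω e) ^ p else 0) ^ ((1 : ℝ) / p)

/-- The `L^∞` congestion of a spanning tree `T`. -/
def treeCongTop (G T : SimpleGraph V) (ω : Sym2 V → ℝ) : ℝ :=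
  ⨆ e ∈ T.edgeSet, edgeCongestion G T ω e

/-- `T` is a spanning tree of `G`. -/
def IsSpanningTree (G T : SimpleGraph V) : Prop := T ≤ G ∧ T.IsTree

/-- The `L^p` spanning tree congestion of `(G, ω)`. -/
def graphCong (G : SimpleGraph V) (ω : Sym2 V → ℝ) (p : ℕ) : ℝ :=
  sInf {x | ∃ T : SimpleGraph V, IsSpanningTree G T ∧ treeCong G T ω p = x}

/-- The `L^∞` spanning tree congestion of `(G, ω)`. -/
def graphCongTop (G : SimpleGraph V) (ω : Sym2 V → ℝ) : ℝ :=
  sInf {x | ∃ T : SimpleGraph V, IsSpanningTree G T ∧ treeCongTop G T ω = x}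

/-- Total weight of (the edges of) a graph. -/
def totalWeight (T : SimpleGraph V) (ρ : Sym2 V → ℝ) : ℝ :=
  ∑ e : Sym2 V, if e ∈ T.edgeSet then ρ e else 0

end CongestionDefs

/-!
Double counting turns the congestion sum of a spanning tree `T` into
`∑_{f ∈ E(G)} ω(f) · #{e ∈ T | e separates the ends of f}`. Every edge of the `T`-path between
the ends of `f` separates them, and this path has length `1` if `f ∈ T` and at least `2`
otherwise, so the sum is at least `∑_f (2 - [f ∈ T]) ω(f) = 2ω(G) - ω(T) ≥ 2ω(G) - ω(T*)`.
With unit weights all spanning trees have `n - 1` edges, so each of them has maximum weight.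
-/

open Finset SimpleGraph

namespace SimpleGraph

variable {V : Type*}

lemma exists_eq_sym2_not_reachable_iff {H : SimpleGraph V} {u v : V} :
    (∃ a b : V, s(u, v) = s(a, b) ∧ ¬ H.Reachable a b) ↔ ¬ H.Reachable u v := by
  refine ⟨?_, fun h => ⟨u, v, rfl, h⟩⟩
  rintro ⟨a, b, hab, hn⟩ h
  rcases Sym2.eq_iff.mp hab with ⟨rfl, rfl⟩ | ⟨rfl, rfl⟩
  exacts [hn h, hn h.symm]

theorem IsAcyclic.not_reachable_deleteEdges_of_mem_edges {T : SimpleGraph V}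
    (hT : T.IsAcyclic) {a b : V} {p : T.Walk a b} (hp : p.IsPath) {e : Sym2 V}
    (he : e ∈ p.edges) : ¬ (T.deleteEdges {e}).Reachable a b := by
  induction e using Sym2.ind with
  | h v w =>
  rw [reachable_deleteEdges_iff_exists_walk]
  rintro ⟨q, hq⟩
  have hpq : (⟨p, hp⟩ : T.Path a b) = ⟨q.bypass, q.bypass_isPath⟩ :=
    (hT.subsingleton_path a b).elim _ _
  rw [Subtype.mk.injEq] at hpq
  exact hq (q.edges_bypass_subset_edges (hpq ▸ he))

theorem IsTree.ite_adj_le_card_filter_not_reachable {T : SimpleGraph V} [Fintype T.edgeSet]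
    (hT : T.IsTree) {u v : V} (huv : u ≠ v) :
    (if T.Adj u v then 1 else 2) ≤
      #{e ∈ T.edgeFinset | ¬ (T.deleteEdges {e}).Reachable u v} := by
  obtain ⟨p⟩ := hT.connected.preconnected u v
  have hq := p.bypass_isPath
  have hlen : (if T.Adj u v then 1 else 2) ≤ p.bypass.length := by
    have hne : p.bypass.length ≠ 0 := fun h => huv (Walk.eq_of_length_eq_zero h)
    split_ifs with hadj
    · omega
    · have : p.bypass.length ≠ 1 := fun h => hadj (Walk.adj_of_length_eq_one h)
      omega
  calc (if T.Adj u v then 1 else 2) ≤ p.bypass.length := hlen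
    _ = #p.bypass.edges.toFinset := by
      rw [List.toFinset_card_of_nodup hq.edges_nodup, Walk.length_edges]
    _ ≤ _ := by
      refine card_le_card fun e he => ?_
      rw [List.mem_toFinset] at he
      rw [mem_filter, mem_edgeFinset]
      exact ⟨p.bypass.edges_subset_edgeSet he,
        hT.isAcyclic.not_reachable_deleteEdges_of_mem_edges hq he⟩

end SimpleGraph

section Congestion

variable {V : Type*} [Fintype V]

lemma totalWeight_eq_sum_edgeFinset (H : SimpleGraph V) (ρ : Sym2 V → ℝ) :
    totalWeight H ρ = ∑ f ∈ H.edgeFinset, ρ f := by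
  simp only [totalWeight, ← mem_edgeFinset, ← sum_filter, filter_univ_mem]

lemma two_mul_totalWeight_sub_eq_sum {G T : SimpleGraph V} (hTG : T ≤ G) (ω : Sym2 V → ℝ) :
    2 * totalWeight G ω - totalWeight T ω =
      ∑ f ∈ G.edgeFinset, (if f ∈ T.edgeSet then 1 else 2) * ω f := by
  have hT : totalWeight T ω = ∑ f ∈ G.edgeFinset, if f ∈ T.edgeSet then ω f else 0 := by
    rw [totalWeight_eq_sum_edgeFinset, ← sum_filter]
    congr 1
    ext f
    simpa using fun h => edgeSet_mono hTG h
  rw [hT, totalWeight_eq_sum_edgeFinset, mul_sum, ← sum_sub_distrib]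
  refine sum_congr rfl fun f _ => ?_
  split_ifs <;> ring

lemma totalWeight_one (H : SimpleGraph V) :
    totalWeight H (fun _ => 1) = H.edgeSet.ncard := by
  rw [totalWeight_eq_sum_edgeFinset, sum_const, nsmul_one, Set.ncard_eq_toFinset_card']
  rfl

lemma IsSpanningTree.totalWeight_one {G T : SimpleGraph V} (hT : IsSpanningTree G T) :
    totalWeight T (fun _ => 1) = Fintype.card V - 1 := by
  rw [totalWeight_eq_sum_edgeFinset, sum_const, nsmul_one, ← hT.2.card_edgeFinset]
  push_cast
  ring

variable [DecidableEq V]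

lemma treeCong_one_eq_sum (G T : SimpleGraph V) (ω : Sym2 V → ℝ) :
    treeCong G T ω 1 = ∑ f ∈ G.edgeFinset,
      #{e ∈ T.edgeFinset | ∃ a b : V, f = s(a, b) ∧ ¬ (T.deleteEdges {e}).Reachable a b} * ω f := by
  simp only [treeCong, edgeCongestion, Nat.cast_one, div_one, pow_one, Real.rpow_one]
  calc _ = ∑ e ∈ T.edgeFinset, ∑ f ∈ G.edgeFinset,
        if ∃ a b : V, f = s(a, b) ∧ ¬ (T.deleteEdges {e}).Reachable a b then ω f else 0 := by
        simp only [← mem_edgeFinset, ← sum_filter, ite_and, filter_univ_mem]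
    _ = _ := by
      rw [sum_comm]
      refine sum_congr rfl fun f _ => ?_
      rw [← sum_filter, sum_const, nsmul_eq_mul]

lemma two_mul_totalWeight_sub_le_treeCong_one {G T : SimpleGraph V} {ω : Sym2 V → ℝ}
    (hω : ∀ e ∈ G.edgeSet, 0 ≤ ω e) (hT : IsSpanningTree G T) :
    2 * totalWeight G ω - totalWeight T ω ≤ treeCong G T ω 1 := by
  rw [two_mul_totalWeight_sub_eq_sum hT.1, treeCong_one_eq_sum]
  refine sum_le_sum fun f hf => mul_le_mul_of_nonneg_right ?_ (hω f (mem_edgeFinset.mp hf))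
  induction f using Sym2.ind with
  | h u v =>
  simp_rw [exists_eq_sym2_not_reachable_iff, mem_edgeSet]
  have huv : u ≠ v := G.ne_of_adj (mem_edgeFinset.mp hf)
  -- `congr` matches the decidability instance that `simp_rw` left in the filter
  exact_mod_cast (hT.2.ite_adj_le_card_filter_not_reachable huv).trans_eq (by congr)

lemma two_mul_totalWeight_sub_le_graphCong_one {G Tstar : SimpleGraph V} {ω : Sym2 V → ℝ}
    (hω : ∀ e ∈ G.edgeSet, 0 ≤ ω e) (hTs : IsSpanningTree G Tstar)
    (hmax : ∀ T, IsSpanningTree G T → totalWeight T ω ≤ totalWeight Tstar ω) :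
    2 * totalWeight G ω - totalWeight Tstar ω ≤ graphCong G ω 1 := by
  refine le_csInf ⟨_, Tstar, hTs, rfl⟩ ?_
  rintro _ ⟨T, hT, rfl⟩
  linarith [hmax T hT, two_mul_totalWeight_sub_le_treeCong_one hω hT]

end Congestion

theorem two_weight_sub_le_graphCong_one_general {V : Type*} [Fintype V] [DecidableEq V]
    (G : SimpleGraph V) (ω : Sym2 V → ℝ)
    (hω : ∀ e ∈ G.edgeSet, 0 < ω e)
    (Tstar : SimpleGraph V) (hTs : IsSpanningTree G Tstar)
    (hmax : ∀ T : SimpleGraph V, IsSpanningTree G T →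
      totalWeight T ω ≤ totalWeight Tstar ω) :
    2 * totalWeight G ω - totalWeight Tstar ω ≤ graphCong G ω 1 ∧
      2 * (G.edgeSet.ncard : ℝ) - (Fintype.card V : ℝ) + 1
        ≤ graphCong G (fun _ => (1 : ℝ)) 1 := by
  refine ⟨two_mul_totalWeight_sub_le_graphCong_one (fun e he => (hω e he).le) hTs hmax, ?_⟩
  have hunit := two_mul_totalWeight_sub_le_graphCong_one (ω := fun _ => (1 : ℝ))
    (fun _ _ => zero_le_one) hTs fun T hT => by rw [hT.totalWeight_one, hTs.totalWeight_one]
  rw [totalWeight_one, hTs.totalWeight_one] at hunit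
  linarith

/-- If `T*` is a maximum weight spanning tree of `(G,ω)` then `2·ω(G) − ω(T*) ≤ C_1(G,ω)`;
in particular, for an unweighted graph with `n` vertices and `m` edges,
`2m − n + 1 ≤ C_1(G)`. -/
theorem two_weight_sub_le_graphCong_one {V : Type*} [Fintype V] [DecidableEq V]
    (G : SimpleGraph V) (hG : G.Connected) (ω : Sym2 V → ℝ)
    (hω : ∀ e ∈ G.edgeSet, 0 < ω e)
    (Tstar : SimpleGraph V) (hTs : IsSpanningTree G Tstar)
    (hmax : ∀ T : SimpleGraph V, IsSpanningTree G T →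
      totalWeight T ω ≤ totalWeight Tstar ω) :
    2 * totalWeight G ω - totalWeight Tstar ω ≤ graphCong G ω 1 ∧
      2 * (G.edgeSet.ncard : ℝ) - (Fintype.card V : ℝ) + 1
        ≤ graphCong G (fun _ => (1 : ℝ)) 1 :=
  two_weight_sub_le_graphCong_one_general G ω hω Tstar hTs hmax
end

section
/- For the complete multipartite graph K_{n_1,…,n_{k−1},1} with n_1 ≥ … ≥ n_{k−1} ≥ n_k = 1 and N = n_1+…+n_{k−1}+1, the radial spanning tree rooted at the unique vertex of the singleton part minimizes the L^p congestion simultaneously for all p, and C_p(K_{n_1,…,n_{k−1},1}) = (Σ_{i=1}^{k−1} n_i (N − n_i)^p)^{1/p}. -/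
open Classical

/-- The star graph centered at `v`: `v` is joined to every other vertex. -/
def starGraph {V : Type*} (v : V) : SimpleGraph V where
  Adj a b := a ≠ b ∧ (a = v ∨ b = v)
  symm := by
    constructor
    intro a b h
    exact ⟨h.1.symm, h.2.symm⟩
  loopless := by
    constructor
    intro a h
    exact h.1 rfl

/-!
Root a spanning tree `T` at the vertex `v` of the singleton part. Every other vertex `u` owns the
edge to its parent, and deleting that edge separates `u` from `v`. Each vertex `x` outside the part
of `u` then yields its own cut edge: `s(u, x)` if `x` stays on the side of `v`, and `s(x, v)`
otherwise (`x ≠ v` is adjacent to `v` since the part of `v` is a singleton). So the parent edge of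
`u` has congestion at least `N - n(u)`, with equality in the star, whose edges are exactly these
parent edges; summing `p`-th powers over `u` shows that the star is optimal.
-/

open Finset

section

open SimpleGraph

theorem SimpleGraph.IsTree.exists_adj_dist_lt_not_reachable {V : Type*} {T : SimpleGraph V}
    (hT : T.IsTree) {r u : V} (hu : u ≠ r) :
    ∃ w, T.Adj u w ∧ T.dist r w < T.dist r u ∧ ¬ (T.deleteEdges {s(u, w)}).Reachable r u := by
  obtain ⟨W, hW⟩ := (hT.connected.preconnected u r).exists_walk_length_eq_dist
  cases W with
  | nil => exact absurd rfl hu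
  | @cons _ w _ hadj W =>
    have hw : T.dist r w ≤ W.length := dist_comm (G := T) ▸ dist_le W
    have hu' : T.dist r u = W.length + 1 := by rw [dist_comm, ← hW, Walk.length_cons]
    refine ⟨w, hadj, by omega, fun hru => ?_⟩
    obtain ⟨S, hS⟩ := (hT.connected.preconnected r w).exists_walk_length_eq_dist
    -- a shortest `r`-`w` walk is too short to pass through `u`, so it avoids the edge `s(u, w)`
    have hu_S : u ∉ S.support := fun h => by
      have := dist_le (S.takeUntil u h)
      have := S.length_takeUntil_le_length h
      omega
    have hS' : (T.deleteEdges {s(u, w)}).Reachable r w :=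
      ⟨S.toDeleteEdges _ fun f hf hfe => hu_S <| by
        rw [Set.mem_singleton_iff.mp hfe] at hf
        exact S.fst_mem_support_of_mem_edges hf⟩
    exact isAcyclic_iff_forall_adj_isBridge.mp hT.isAcyclic hadj (hru.symm.trans hS')

theorem SimpleGraph.IsTree.sum_erase_le_sum_edgeFinset {V M : Type*} [Fintype V] [DecidableEq V]
    [AddCommMonoid M] [PartialOrder M] [IsOrderedAddMonoid M]
    {T : SimpleGraph V} [Fintype T.edgeSet] (hT : T.IsTree) (r : V) {b : V → M}
    {c : Sym2 V → M} (hc : ∀ e ∈ T.edgeSet, 0 ≤ c e)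
    (hbc : ∀ u e, u ≠ r → e ∈ T.edgeSet → ¬ (T.deleteEdges {e}).Reachable r u → b u ≤ c e) :
    ∑ u ∈ univ.erase r, b u ≤ ∑ e ∈ T.edgeFinset, c e := by
  choose! parent hadj hdist hsep using fun u (hu : u ≠ r) =>
    hT.exists_adj_dist_lt_not_reachable hu
  have hinj : Set.InjOn (fun u => s(u, parent u)) (univ.erase r : Finset V) := by
    intro u hu u' hu' h
    rw [mem_coe, mem_erase] at hu hu'
    rcases Sym2.eq_iff.mp h with ⟨h, -⟩ | ⟨h₁, h₂⟩
    · exact h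
    · exact absurd (h₂ ▸ hdist u hu.1) (h₁ ▸ hdist u' hu'.1).not_gt
  calc ∑ u ∈ univ.erase r, b u
      ≤ ∑ u ∈ univ.erase r, c s(u, parent u) :=
        sum_le_sum fun u hu => hbc u _ (ne_of_mem_erase hu)
          (hadj u (ne_of_mem_erase hu)) (hsep u (ne_of_mem_erase hu))
    _ = ∑ e ∈ (univ.erase r).image fun u => s(u, parent u), c e := (sum_image hinj).symm
    _ ≤ ∑ e ∈ T.edgeFinset, c e := by
        refine sum_le_sum_of_subset_of_nonneg ?_ fun e he _ => hc e (mem_edgeFinset.mp he)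
        intro e he
        obtain ⟨u, hu, rfl⟩ := mem_image.mp he
        exact mem_edgeFinset.mpr (hadj u (ne_of_mem_erase hu))

theorem starGraph_eq_simpleGraph_starGraph {V : Type*} (v : V) :
    _root_.starGraph v = SimpleGraph.starGraph v := by
  ext a b
  rw [SimpleGraph.starGraph_adj]
  rfl

theorem SimpleGraph.reachable_deleteEdges_starGraph {V : Type*} {v u x : V} (hx : x ≠ u) :
    ((SimpleGraph.starGraph v).deleteEdges {s(v, u)}).Reachable v x := by
  by_cases hxv : x = v
  · rw [hxv]
  · refine Adj.reachable (deleteEdges_adj.mpr ⟨starGraph_center_adj (Ne.symm hxv), ?_⟩)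
    exact fun h => hx (Sym2.congr_right.mp (Set.mem_singleton_iff.mp h))

theorem SimpleGraph.edgeFinset_starGraph {V : Type*} [Fintype V] [DecidableEq V] {v : V}
    [Fintype (SimpleGraph.starGraph v).edgeSet] :
    (SimpleGraph.starGraph v).edgeFinset = (univ.erase v).image (s(v, ·)) := by
  ext e
  induction e with
  | _ a b =>
    simp only [mem_edgeFinset, mem_edgeSet, starGraph_adj, mem_image, mem_erase, mem_univ,
      and_true]
    constructor
    · rintro ⟨hab, rfl | rfl⟩
      · exact ⟨b, hab.symm, rfl⟩
      · exact ⟨a, hab, Sym2.eq_swap⟩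
    · rintro ⟨u, hu, h⟩
      rcases Sym2.eq_iff.mp h with ⟨rfl, rfl⟩ | ⟨rfl, rfl⟩
      · exact ⟨Ne.symm hu, Or.inl rfl⟩
      · exact ⟨hu, Or.inr rfl⟩

section Congestion

variable {V : Type*} [Fintype V] [DecidableEq V]

noncomputable def cutEdges (G T : SimpleGraph V) (e : Sym2 V) : Finset (Sym2 V) :=
  univ.filter fun f => f ∈ G.edgeSet ∧ ∃ a b, f = s(a, b) ∧ ¬ (T.deleteEdges {e}).Reachable a b

theorem mk_mem_cutEdges {G T : SimpleGraph V} {e : Sym2 V} {a b : V} :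
    s(a, b) ∈ cutEdges G T e ↔ G.Adj a b ∧ ¬ (T.deleteEdges {e}).Reachable a b := by
  simp only [cutEdges, mem_filter, mem_univ, true_and, mem_edgeSet]
  refine and_congr_right fun _ => ⟨?_, fun h => ⟨a, b, rfl, h⟩⟩
  rintro ⟨a', b', h, hr⟩
  rcases Sym2.eq_iff.mp h with ⟨rfl, rfl⟩ | ⟨rfl, rfl⟩
  · exact hr
  · exact fun h => hr h.symm

theorem edgeCongestion_one (G T : SimpleGraph V) (e : Sym2 V) :
    edgeCongestion G T (fun _ => 1) e = #(cutEdges G T e) := by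
  rw [edgeCongestion, cutEdges, ← sum_boole]

theorem treeCong_eq_sum_edgeFinset (G T : SimpleGraph V) [Fintype T.edgeSet] (ω : Sym2 V → ℝ)
    (p : ℕ) :
    treeCong G T ω p = (∑ e ∈ T.edgeFinset, edgeCongestion G T ω e ^ p) ^ ((1 : ℝ) / p) := by
  rw [treeCong, ← sum_filter]
  congr 2
  ext e
  simp

theorem graphCong_eq_treeCong {G T₀ : SimpleGraph V} {ω : Sym2 V → ℝ} {p : ℕ}
    (hT₀ : IsSpanningTree G T₀)
    (hmin : ∀ T, IsSpanningTree G T → treeCong G T₀ ω p ≤ treeCong G T ω p) :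
    graphCong G ω p = treeCong G T₀ ω p :=
  IsLeast.csInf_eq ⟨⟨T₀, hT₀, rfl⟩, by rintro _ ⟨T, hT, rfl⟩; exact hmin T hT⟩

end Congestion

section CompleteMultipartite

variable {ι : Type*} {V : ι → Type*}

theorem eq_of_fst_eq_of_card_eq_one [∀ i, Fintype (V i)] {v x : Σ i, V i}
    (hv : Fintype.card (V v.1) = 1) (h : x.1 = v.1) : x = v := by
  obtain ⟨i, a⟩ := x
  obtain ⟨j, b⟩ := v
  obtain rfl : i = j := h
  rw [Fintype.card_le_one_iff.mp hv.le a b]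

theorem SimpleGraph.starGraph_le_completeMultipartiteGraph [∀ i, Fintype (V i)] {v : Σ i, V i}
    (hv : Fintype.card (V v.1) = 1) :
    SimpleGraph.starGraph v ≤ completeMultipartiteGraph V := by
  rintro a b ⟨hab, rfl | rfl⟩
  · exact fun h => hab (eq_of_fst_eq_of_card_eq_one hv h.symm).symm
  · exact fun h => hab (eq_of_fst_eq_of_card_eq_one hv h)

variable [Fintype ι] [DecidableEq ι] [∀ i, Fintype (V i)]

theorem card_filter_fst_ne_add_card (j : ι) :
    #(univ.filter fun x : Σ i, V i => x.1 ≠ j) + Fintype.card (V j) =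
      Fintype.card (Σ i, V i) := by
  rw [← Fintype.card_congr (Equiv.sigmaSubtype j), Fintype.card_subtype, add_comm,
    card_filter_add_card_filter_not, card_univ]

theorem sum_erase_comp_fst [∀ i, DecidableEq (V i)] {M : Type*} [AddCancelCommMonoid M]
    (f : ι → M) {v : Σ i, V i} (hv : Fintype.card (V v.1) = 1) :
    ∑ u ∈ univ.erase v, f u.1 = ∑ i ∈ univ.erase v.1, Fintype.card (V i) • f i := by
  refine add_right_cancel (b := f v.1) ?_
  conv_rhs => rw [← one_nsmul (f v.1), ← hv]
  rw [sum_erase_add _ _ (mem_univ v), sum_erase_add _ _ (mem_univ v.1), Fintype.sum_sigma]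
  simp

variable [∀ i, DecidableEq (V i)]

theorem card_filter_fst_ne_le_card_cutEdges {T : SimpleGraph (Σ i, V i)} {e : Sym2 (Σ i, V i)}
    {v u : Σ i, V i} (hv : Fintype.card (V v.1) = 1)
    (hsep : ¬ (T.deleteEdges {e}).Reachable v u) :
    #(univ.filter fun x : Σ i, V i => x.1 ≠ u.1) ≤
      #(cutEdges (completeMultipartiteGraph V) T e) := by
  set R := (T.deleteEdges {e}).Reachable v
  refine card_le_card_of_injOn (fun x => if R x then s(u, x) else s(x, v)) ?_ ?_
  · intro x hx
    have hx : x.1 ≠ u.1 := (mem_filter.mp hx).2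
    dsimp only
    split_ifs with hRx
    · exact mk_mem_cutEdges.mpr ⟨fun h => hx h.symm, fun h => hsep (hRx.trans h.symm)⟩
    · have hxv : x ≠ v := by rintro rfl; exact hRx (Reachable.refl _)
      exact mk_mem_cutEdges.mpr
        ⟨fun h => hxv (eq_of_fst_eq_of_card_eq_one hv h), fun h => hRx h.symm⟩
  · intro x hx y hy h
    have hx : x.1 ≠ u.1 := (mem_filter.mp hx).2
    have hy : y.1 ≠ u.1 := (mem_filter.mp hy).2
    dsimp only at h
    split_ifs at h with hRx hRy hRy
    · exact Sym2.congr_right.mp h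
    · rcases Sym2.eq_iff.mp h with ⟨rfl, -⟩ | ⟨rfl, rfl⟩
      · exact absurd rfl hy
      · exact absurd hRx hRy
    · rcases Sym2.eq_iff.mp h with ⟨rfl, -⟩ | ⟨rfl, rfl⟩
      · exact absurd rfl hx
      · exact absurd hRy hRx
    · exact Sym2.congr_left.mp h

theorem card_cutEdges_starGraph_le (v u : Σ i, V i) :
    #(cutEdges (completeMultipartiteGraph V) (SimpleGraph.starGraph v) s(v, u)) ≤
      #(univ.filter fun x : Σ i, V i => x.1 ≠ u.1) := by
  refine (card_le_card fun f hf => ?_).trans (card_image_le (f := (s(u, ·))))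
  induction f with
  | _ a b =>
    obtain ⟨hab, hsep⟩ := mk_mem_cutEdges.mp hf
    by_cases ha : a = u
    · subst ha
      exact mem_image.mpr ⟨b, mem_filter.mpr ⟨mem_univ _, fun h => hab h.symm⟩, rfl⟩
    by_cases hb : b = u
    · subst hb
      exact mem_image.mpr ⟨a, mem_filter.mpr ⟨mem_univ _, hab⟩, Sym2.eq_swap⟩
    exact absurd ((reachable_deleteEdges_starGraph ha).symm.trans
      (reachable_deleteEdges_starGraph hb)) hsep

end CompleteMultipartite

section StarCongestion

variable {ι : Type*} [Fintype ι] [DecidableEq ι] {V : ι → Type*} [∀ i, Fintype (V i)]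
  [∀ i, DecidableEq (V i)] {v : Σ i, V i}

theorem edgeCongestion_starGraph (hv : Fintype.card (V v.1) = 1) {u : Σ i, V i} (hu : u ≠ v) :
    edgeCongestion (completeMultipartiteGraph V) (SimpleGraph.starGraph v) (fun _ => 1) s(v, u) =
      #(univ.filter fun x : Σ i, V i => x.1 ≠ u.1) := by
  have hsep : ¬ ((SimpleGraph.starGraph v).deleteEdges {s(v, u)}).Reachable v u :=
    isAcyclic_iff_forall_adj_isBridge.mp (isAcyclic_starGraph v) (starGraph_center_adj hu.symm)
  rw [edgeCongestion_one]
  exact_mod_cast le_antisymm (card_cutEdges_starGraph_le v u)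
    (card_filter_fst_ne_le_card_cutEdges hv hsep)

theorem sum_edgeCongestion_pow_starGraph (hv : Fintype.card (V v.1) = 1)
    [Fintype (SimpleGraph.starGraph v).edgeSet] (p : ℕ) :
    ∑ e ∈ (SimpleGraph.starGraph v).edgeFinset,
        edgeCongestion (completeMultipartiteGraph V) (SimpleGraph.starGraph v) (fun _ => 1) e ^ p =
      ∑ u ∈ univ.erase v, (#(univ.filter fun x : Σ i, V i => x.1 ≠ u.1) : ℝ) ^ p := by
  rw [edgeFinset_starGraph, sum_image fun _ _ _ _ h => Sym2.congr_right.mp h]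
  exact sum_congr rfl fun u hu => by rw [edgeCongestion_starGraph hv (ne_of_mem_erase hu)]

theorem treeCong_starGraph (hv : Fintype.card (V v.1) = 1) (p : ℕ) :
    treeCong (completeMultipartiteGraph V) (SimpleGraph.starGraph v) (fun _ => 1) p =
      (∑ i ∈ univ.erase v.1,
        (Fintype.card (V i) : ℝ) * ((Fintype.card (Σ i, V i) : ℝ) - Fintype.card (V i)) ^ p) ^
        ((1 : ℝ) / p) := by
  rw [treeCong_eq_sum_edgeFinset, sum_edgeCongestion_pow_starGraph hv]
  simp only [← nsmul_eq_mul]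
  congr 1
  refine (sum_congr rfl fun u _ => ?_).trans
    (sum_erase_comp_fst (fun i => ((Fintype.card (Σ i, V i) : ℝ) - Fintype.card (V i)) ^ p) hv)
  rw [← card_filter_fst_ne_add_card u.1]
  push_cast
  ring

theorem treeCong_starGraph_le (hv : Fintype.card (V v.1) = 1) {T : SimpleGraph (Σ i, V i)}
    (hT : T.IsTree) (p : ℕ) :
    treeCong (completeMultipartiteGraph V) (SimpleGraph.starGraph v) (fun _ => 1) p ≤
      treeCong (completeMultipartiteGraph V) T (fun _ => 1) p := by
  rw [treeCong_eq_sum_edgeFinset, treeCong_eq_sum_edgeFinset, sum_edgeCongestion_pow_starGraph hv]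
  refine Real.rpow_le_rpow (by positivity) ?_ (by positivity)
  refine hT.sum_erase_le_sum_edgeFinset v (fun e _ => by rw [edgeCongestion_one]; positivity)
    fun u e _ _ hsep => ?_
  rw [edgeCongestion_one]
  gcongr
  exact card_filter_fst_ne_le_card_cutEdges hv hsep

end StarCongestion

end

theorem completeMultipartite_cong_general (k : ℕ) (hk : 0 < k) (n : Fin k → ℕ)
    (hlast : n ⟨k - 1, Nat.sub_lt hk Nat.one_pos⟩ = 1)
    (v0 : Σ i : Fin k, Fin (n i))
    (hv0 : v0.1 = ⟨k - 1, Nat.sub_lt hk Nat.one_pos⟩)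
    (p : ℕ) :
    (IsSpanningTree (SimpleGraph.completeMultipartiteGraph (fun i : Fin k => Fin (n i)))
        (starGraph v0) ∧
      ∀ T : SimpleGraph (Σ i : Fin k, Fin (n i)),
        IsSpanningTree (SimpleGraph.completeMultipartiteGraph (fun i : Fin k => Fin (n i))) T →
          treeCong (SimpleGraph.completeMultipartiteGraph (fun i : Fin k => Fin (n i)))
              (starGraph v0) (fun _ => (1 : ℝ)) p
            ≤ treeCong (SimpleGraph.completeMultipartiteGraph (fun i : Fin k => Fin (n i)))
              T (fun _ => (1 : ℝ)) p) ∧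
    graphCong (SimpleGraph.completeMultipartiteGraph (fun i : Fin k => Fin (n i)))
        (fun _ => (1 : ℝ)) p
      = (∑ i ∈ Finset.univ.erase ⟨k - 1, Nat.sub_lt hk Nat.one_pos⟩,
          (n i : ℝ) * (((∑ j, n j : ℕ) : ℝ) - (n i : ℝ)) ^ p) ^ ((1 : ℝ) / p) := by
  have hv : Fintype.card (Fin (n v0.1)) = 1 := by rw [Fintype.card_fin, hv0, hlast]
  have hstar : IsSpanningTree (SimpleGraph.completeMultipartiteGraph fun i : Fin k => Fin (n i))
      (SimpleGraph.starGraph v0) :=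
    ⟨SimpleGraph.starGraph_le_completeMultipartiteGraph hv, SimpleGraph.isTree_starGraph v0⟩
  have hmin (T : SimpleGraph (Σ i : Fin k, Fin (n i)))
      (hT : IsSpanningTree (SimpleGraph.completeMultipartiteGraph fun i : Fin k => Fin (n i)) T) :=
    treeCong_starGraph_le hv hT.2 p
  rw [starGraph_eq_simpleGraph_starGraph]
  refine ⟨⟨hstar, hmin⟩, ?_⟩
  rw [graphCong_eq_treeCong hstar hmin, treeCong_starGraph hv, hv0]
  simp [Fintype.card_sigma]

/-- For `K_{n₁,…,n_{k−1},1}` with `n₁ ≥ … ≥ n_{k−1} ≥ n_k = 1` and `N = Σ nᵢ`, the radial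
(star) spanning tree rooted at the vertex of the singleton part minimizes the `L^p`
congestion for every `p ≥ 1`, and
`C_p = (Σ_{i<k} nᵢ (N − nᵢ)^p)^(1/p)` (sum over the non-singleton parts). -/
theorem completeMultipartite_cong (k : ℕ) (hk : 0 < k) (n : Fin k → ℕ)
    (hpos : ∀ i, 0 < n i) (hmono : Antitone n)
    (hlast : n ⟨k - 1, Nat.sub_lt hk Nat.one_pos⟩ = 1)
    (v0 : Σ i : Fin k, Fin (n i))
    (hv0 : v0.1 = ⟨k - 1, Nat.sub_lt hk Nat.one_pos⟩)
    (p : ℕ) (hp : 1 ≤ p) :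
    (IsSpanningTree (SimpleGraph.completeMultipartiteGraph (fun i : Fin k => Fin (n i)))
        (starGraph v0) ∧
      ∀ T : SimpleGraph (Σ i : Fin k, Fin (n i)),
        IsSpanningTree (SimpleGraph.completeMultipartiteGraph (fun i : Fin k => Fin (n i))) T →
          treeCong (SimpleGraph.completeMultipartiteGraph (fun i : Fin k => Fin (n i)))
              (starGraph v0) (fun _ => (1 : ℝ)) p
            ≤ treeCong (SimpleGraph.completeMultipartiteGraph (fun i : Fin k => Fin (n i)))
              T (fun _ => (1 : ℝ)) p) ∧
    graphCong (SimpleGraph.completeMultipartiteGraph (fun i : Fin k => Fin (n i)))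
        (fun _ => (1 : ℝ)) p
      = (∑ i ∈ Finset.univ.erase ⟨k - 1, Nat.sub_lt hk Nat.one_pos⟩,
          (n i : ℝ) * (((∑ j, n j : ℕ) : ℝ) - (n i : ℝ)) ^ p) ^ ((1 : ℝ) / p) :=
  completeMultipartite_cong_general k hk n hlast v0 hv0 p
end
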